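/- Let (𝔣, 𝔱, k) be a unit-speed space-form curve frame on an open interval I with data (𝔭, 𝔮, χ, κ), with k(t) ≠ 0 for all t ∈ I, and set C(t) := span{𝔣(t), 𝔱(t)} and ξ(t) := −𝔣(t) ∧ 𝔣′(t). Suppose (r₀, r₁) is a linear conserved quantity of d + tξ, i.e. r₁ : I → V is smooth with r₁(t) ∈ C(t) and r₁′(t) + ξ(t)r₀ = 0 for all t ∈ I, such that r₀ ∉ span{𝔭, 𝔮}. Then the curve is constrained elastic: there exist λ, μ ∈ ℝ with k″ + (χ/2)k³ + (μ + κ)k + λ = 0 on I. -/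

import Mathlib

noncomputable section

/-- `V = ℝ⁵`. -/
abbrev V : Type := Fin 5 → ℝ

/-- The symmetric bilinear form of signature (3,2) on `V`. -/
def bB (x y : V) : ℝ := x 0 * y 0 + x 1 * y 1 + x 2 * y 2 - x 3 * y 3 - x 4 * y 4

/-- The skew-symmetric endomorphism `a ∧ b` of `V`. -/
def wedge (a b : V) : V →L[ℝ] V :=
  LinearMap.toContinuousLinearMap
    { toFun := fun x => bB a x • b - bB b x • a
      map_add' := by
        intro x y
        have h1 : bB a (x + y) = bB a x + bB a y := by simp [bB]; ring
        have h2 : bB b (x + y) = bB b x + bB b y := by simp [bB]; ring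
        try dsimp only
        rw [h1, h2]; module
      map_smul' := by
        intro c x
        have h1 : bB a (c • x) = c * bB a x := by simp [bB]; ring
        have h2 : bB b (c • x) = c * bB b x := by simp [bB]; ring
        try dsimp only
        rw [h1, h2]
        simp only [RingHom.id_apply]
        module }

/-- Membership in `C(t) = span{σ₁(t), σ₂(t)}`. -/
def memC (σ₁ σ₂ : ℝ → V) (t : ℝ) (x : V) : Prop :=
  ∃ a b : ℝ, x = a • σ₁ t + b • σ₂ t

/-- A Legendre curve frame on an open interval `I`. -/
structure LegendreCurveFrame (I : Set ℝ) (σ₁ σ₂ : ℝ → V) : Prop where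
  isOpen : IsOpen I
  ordConn : I.OrdConnected
  smooth₁ : ContDiffOn ℝ (⊤ : ℕ∞) σ₁ I
  smooth₂ : ContDiffOn ℝ (⊤ : ℕ∞) σ₂ I
  indep : ∀ t ∈ I, ∀ a b : ℝ, a • σ₁ t + b • σ₂ t = 0 → a = 0 ∧ b = 0
  iso₁₁ : ∀ t ∈ I, bB (σ₁ t) (σ₁ t) = 0
  iso₁₂ : ∀ t ∈ I, bB (σ₁ t) (σ₂ t) = 0
  iso₂₂ : ∀ t ∈ I, bB (σ₂ t) (σ₂ t) = 0
  d₁₁ : ∀ t ∈ I, bB (deriv σ₁ t) (σ₁ t) = 0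
  d₁₂ : ∀ t ∈ I, bB (deriv σ₁ t) (σ₂ t) = 0
  d₂₁ : ∀ t ∈ I, bB (deriv σ₂ t) (σ₁ t) = 0
  d₂₂ : ∀ t ∈ I, bB (deriv σ₂ t) (σ₂ t) = 0
  rank3 : ∀ t ∈ I,
    Module.finrank ℝ
      ↥(Submodule.span ℝ ({σ₁ t, σ₂ t, deriv σ₁ t, deriv σ₂ t} : Set V)) = 3

/-- The curve `C` is circular. -/
def Circular (I : Set ℝ) (σ₁ σ₂ : ℝ → V) : Prop :=
  ∃ v : V, v ≠ 0 ∧ ∀ t ∈ I, memC σ₁ σ₂ t v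

/-- `ξ(t)` is a sum of endomorphisms `a ∧ b` with `a ∈ C(t)` and `b ∈ C(t)^⊥`. -/
def PolarForm (I : Set ℝ) (σ₁ σ₂ : ℝ → V) (ξ : ℝ → V →L[ℝ] V) : Prop :=
  ∀ t ∈ I, ∃ b₁ b₂ : V,
    bB b₁ (σ₁ t) = 0 ∧ bB b₁ (σ₂ t) = 0 ∧ bB b₂ (σ₁ t) = 0 ∧ bB b₂ (σ₂ t) = 0 ∧
    ξ t = wedge (σ₁ t) b₁ + wedge (σ₂ t) b₂

/-- `Q` represents the quadratic differential of `ξ`. -/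
def IsQuadDiff (I : Set ℝ) (σ₁ σ₂ : ℝ → V) (ξ : ℝ → V →L[ℝ] V) (Q : ℝ → ℝ) : Prop :=
  ∀ t ∈ I, ∃ a b c d : ℝ,
    ξ t (deriv σ₁ t) = a • σ₁ t + b • σ₂ t ∧
    ξ t (deriv σ₂ t) = c • σ₁ t + d • σ₂ t ∧
    Q t = a + d

/-- `ξ` is a polarisation of the curve `C`. -/
def IsPolarisation (I : Set ℝ) (σ₁ σ₂ : ℝ → V) (ξ : ℝ → V →L[ℝ] V) : Prop :=
  ContDiffOn ℝ (⊤ : ℕ∞) ξ I ∧ PolarForm I σ₁ σ₂ ξ ∧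
  ∃ Q : ℝ → ℝ, IsQuadDiff I σ₁ σ₂ ξ Q ∧ ∃ t ∈ I, Q t ≠ 0

/-- `(p₀, p₁)` is a linear conserved quantity of `d + tξ`. -/
def IsLCQ (I : Set ℝ) (σ₁ σ₂ : ℝ → V) (ξ : ℝ → V →L[ℝ] V) (p₀ : V) (p₁ : ℝ → V) : Prop :=
  ContDiffOn ℝ (⊤ : ℕ∞) p₁ I ∧
  (∀ t ∈ I, memC σ₁ σ₂ t (p₁ t)) ∧
  ∀ t ∈ I, deriv p₁ t + ξ t p₀ = 0


/-- A unit-speed space-form curve frame with data `(p, q, χ, κ)`: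
`f` is the light-cone lift of a unit-speed curve of geodesic curvature `k` in the
2-dimensional space form of constant curvature `κ`, and `tf` its tangent congruence. -/
structure SpaceFormFrame (I : Set ℝ) (p q : V) (χ κ : ℝ)
    (f tf : ℝ → V) (k : ℝ → ℝ) : Prop where
  isOpen : IsOpen I
  ordConn : I.OrdConnected
  hχ : χ = 1 ∨ χ = -1
  hq0 : q ≠ 0
  hpp : bB p p = -χ
  hqq : bB q q = -κ
  hpq : bB p q = 0
  smoothf : ContDiffOn ℝ (⊤ : ℕ∞) f I
  smootht : ContDiffOn ℝ (⊤ : ℕ∞) tf I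
  smoothk : ContDiffOn ℝ (⊤ : ℕ∞) k I
  hff : ∀ s ∈ I, bB (f s) (f s) = 0
  htt : ∀ s ∈ I, bB (tf s) (tf s) = 0
  hft : ∀ s ∈ I, bB (f s) (tf s) = 0
  hfq : ∀ s ∈ I, bB (f s) q = -1
  hfp : ∀ s ∈ I, bB (f s) p = 0
  htp : ∀ s ∈ I, bB (tf s) p = -1
  htq : ∀ s ∈ I, bB (tf s) q = 0
  hunit : ∀ s ∈ I, bB (deriv f s) (deriv f s) = 1
  htang : ∀ s ∈ I, deriv tf s = -(k s) • deriv f s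

lemma bB_symm (x y : V) : bB x y = bB y x := by unfold bB; ring
lemma bB_add_left (x y z : V) : bB (x + y) z = bB x z + bB y z := by simp [bB]; ring
lemma bB_sub_left (x y z : V) : bB (x - y) z = bB x z - bB y z := by simp [bB]; ring
lemma bB_smul_left (c : ℝ) (x y : V) : bB (c • x) y = c * bB x y := by simp [bB]; ring
lemma bB_add_right (x y z : V) : bB x (y + z) = bB x y + bB x z := by simp [bB]; ring
lemma bB_sub_right (x y z : V) : bB x (y - z) = bB x y - bB x z := by simp [bB]; ring
lemma bB_smul_right (c : ℝ) (x y : V) : bB x (c • y) = c * bB x y := by simp [bB]; ring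
lemma bB_zero_left (x : V) : bB 0 x = 0 := by simp [bB]
lemma bB_zero_right (x : V) : bB x 0 = 0 := by simp [bB]
lemma bB_neg_left (x y : V) : bB (-x) y = -(bB x y) := by simp [bB]; ring

lemma hasDerivAt_bB {x y : ℝ → V} {x' y' : V} {t : ℝ}
    (hx : HasDerivAt x x' t) (hy : HasDerivAt y y' t) :
    HasDerivAt (fun s => bB (x s) (y s)) (bB x' (y t) + bB (x t) y') t := by
  have hx' := hasDerivAt_pi.1 hx
  have hy' := hasDerivAt_pi.1 hy
  have h := (((((hx' 0).mul (hy' 0)).add ((hx' 1).mul (hy' 1))).add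
      ((hx' 2).mul (hy' 2))).sub ((hx' 3).mul (hy' 3))).sub ((hx' 4).mul (hy' 4))
  have e : bB x' (y t) + bB (x t) y' =
      x' 0 * y t 0 + x t 0 * y' 0 + (x' 1 * y t 1 + x t 1 * y' 1) +
        (x' 2 * y t 2 + x t 2 * y' 2) - (x' 3 * y t 3 + x t 3 * y' 3) -
        (x' 4 * y t 4 + x t 4 * y' 4) := by unfold bB; ring
  rw [e]
  exact h

lemma deriv_eq_zero_on {I : Set ℝ} (hI : IsOpen I) {g : ℝ → ℝ} {c D t : ℝ}
    (ht : t ∈ I) (hg : ∀ s ∈ I, g s = c) (hD : HasDerivAt g D t) : D = 0 := by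
  have h0 : HasDerivAt g 0 t := by
    apply (hasDerivAt_const t c).congr_of_eventuallyEq
    filter_upwards [hI.mem_nhds ht] with s hs using hg s hs
  exact hD.unique h0

lemma hasDerivAt_congr_on {I : Set ℝ} (hI : IsOpen I) {g h : ℝ → ℝ} {D t : ℝ}
    (ht : t ∈ I) (he : ∀ s ∈ I, g s = h s) (hD : HasDerivAt h D t) : HasDerivAt g D t := by
  apply hD.congr_of_eventuallyEq
  filter_upwards [hI.mem_nhds ht] with s hs using he s hs
lemma perp_frame {χ κ : ℝ} {w0 w1 w2 p q z : V}
    (h00 : bB w0 w0 = 0) (h01 : bB w0 w1 = 0) (h02 : bB w0 w2 = 0)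
    (h0p : bB w0 p = 0) (h0q : bB w0 q = -1)
    (h11 : bB w1 w1 = 0) (h12 : bB w1 w2 = 0) (h1p : bB w1 p = -1) (h1q : bB w1 q = 0)
    (h22 : bB w2 w2 = 1) (h2p : bB w2 p = 0) (h2q : bB w2 q = 0)
    (hpp : bB p p = -χ) (hpq : bB p q = 0) (hqq : bB q q = -κ)
    (hz0 : bB z w0 = 0) (hz1 : bB z w1 = 0) (hz2 : bB z w2 = 0)
    (hzp : bB z p = 0) (hzq : bB z q = 0) : z = 0 := by
  have v : Fin 5 → V := ![w0, w1, w2, p, q]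
  have hli : LinearIndependent ℝ ![w0, w1, w2, p, q] := by
    rw [Fintype.linearIndependent_iff]
    intro g hg
    have key : ∀ w : V, g 0 * bB w w0 + g 1 * bB w w1 + g 2 * bB w w2 +
        g 3 * bB w p + g 4 * bB w q = 0 := by
      intro w
      have h := congrArg (fun x => bB w x) hg
      simp only [Fin.sum_univ_five, Matrix.cons_val_zero, Matrix.cons_val_one,
        Matrix.head_cons, Matrix.cons_val_two, Matrix.tail_cons, Matrix.cons_val_three,
        Matrix.cons_val_four, bB_add_right, bB_smul_right, bB_zero_right] at h
      linarith [h]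
    have e0 := key w0; have e1 := key w1; have e2 := key w2
    have ep := key p; have eq' := key q
    rw [h00, h01, h02, h0p, h0q] at e0
    rw [bB_symm w1 w0, h01, h11, h12, h1p, h1q] at e1
    rw [bB_symm w2 w0, h02, bB_symm w2 w1, h12, h22, h2p, h2q] at e2
    rw [bB_symm p w0, h0p, bB_symm p w1, h1p, bB_symm p w2, h2p, hpp, hpq] at ep
    rw [bB_symm q w0, h0q, bB_symm q w1, h1q, bB_symm q w2, h2q, bB_symm q p, hpq, hqq] at eq'
    have hg4 : g 4 = 0 := by linarith
    have hg3 : g 3 = 0 := by linarith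
    have hg2 : g 2 = 0 := by linarith
    have hg1 : g 1 = 0 := by
      have := ep; rw [hg3] at this; linarith
    have hg0 : g 0 = 0 := by
      have := eq'; rw [hg4] at this; linarith
    intro i; fin_cases i <;> assumption
  have hspan : Submodule.span ℝ (Set.range ![w0, w1, w2, p, q]) = ⊤ :=
    hli.span_eq_top_of_card_eq_finrank (by simp)
  have hall : ∀ x : V, bB z x = 0 := by
    intro x
    have hx : x ∈ Submodule.span ℝ (Set.range ![w0, w1, w2, p, q]) := by
      rw [hspan]; trivial
    induction hx using Submodule.span_induction with
    | mem w hw =>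
      obtain ⟨i, rfl⟩ := hw
      fin_cases i <;> simp only [Matrix.cons_val_zero, Matrix.cons_val_one, Matrix.head_cons,
        Matrix.cons_val_two, Matrix.tail_cons, Matrix.cons_val_three, Matrix.cons_val_four] <;>
        assumption
    | zero => exact bB_zero_right z
    | add a b _ _ ha hb => rw [bB_add_right, ha, hb]; ring
    | smul c a _ ha => rw [bB_smul_right, ha]; ring
  funext i
  fin_cases i
  · have := hall ![1,0,0,0,0]; simpa [bB] using this
  · have := hall ![0,1,0,0,0]; simpa [bB] using this
  · have := hall ![0,0,1,0,0]; simpa [bB] using this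
  · have := hall ![0,0,0,1,0]; simpa [bB] using this
  · have := hall ![0,0,0,0,1]; simpa [bB] using this

lemma wedge_apply (a b x : V) : wedge a b x = bB a x • b - bB b x • a := rfl

/-- if the arclength polarisation `ξ = −𝔣 ∧ 𝔣′` admits a linear conserved
quantity whose constant term lies outside `span{𝔭, 𝔮}`, then the curve is constrained
elastic. -/
theorem stmt12 (I : Set ℝ) (p q : V) (χ κ : ℝ) (f tf : ℝ → V) (k : ℝ → ℝ)
    (h : SpaceFormFrame I p q χ κ f tf k)
    (hk : ∀ s ∈ I, k s ≠ 0)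
    (ξ : ℝ → V →L[ℝ] V) (hξ : ∀ s, ξ s = -(wedge (f s) (deriv f s)))
    (r₀ : V) (r₁ : ℝ → V)
    (hr : IsLCQ I f tf ξ r₀ r₁)
    (hr0 : r₀ ∉ Submodule.span ℝ ({p, q} : Set V)) :
    ∃ lam mu : ℝ, ∀ s ∈ I,
      deriv (deriv k) s + χ / 2 * (k s) ^ 3 + (mu + κ) * k s + lam = 0 := by
  classical
  by_cases hne : ∃ t₀, t₀ ∈ I
  swap
  · exact ⟨0, 0, fun s hs => absurd ⟨s, hs⟩ hne⟩
  obtain ⟨t₀, ht₀⟩ := hne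
  obtain ⟨hr₁smooth, hrC, hreq⟩ := hr
  have hIo := h.isOpen
  have hIconv : Convex ℝ I := convex_iff_ordConnected.2 h.ordConn
  -- differentiability
  have hfd : ∀ s ∈ I, HasDerivAt f (deriv f s) s := fun s hs =>
    ((h.smoothf.differentiableOn (by simp)).differentiableAt (hIo.mem_nhds hs)).hasDerivAt
  have hf'C : ContDiffOn ℝ (⊤ : ℕ∞) (deriv f) I := h.smoothf.deriv_of_isOpen hIo (by simp)
  have hfd2 : ∀ s ∈ I, HasDerivAt (deriv f) (deriv (deriv f) s) s := fun s hs =>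
    ((hf'C.differentiableOn (by simp)).differentiableAt (hIo.mem_nhds hs)).hasDerivAt
  have htd : ∀ s ∈ I, HasDerivAt tf (deriv tf s) s := fun s hs =>
    ((h.smootht.differentiableOn (by simp)).differentiableAt (hIo.mem_nhds hs)).hasDerivAt
  have hkd : ∀ s ∈ I, HasDerivAt k (deriv k s) s := fun s hs =>
    ((h.smoothk.differentiableOn (by simp)).differentiableAt (hIo.mem_nhds hs)).hasDerivAt
  have hk'C : ContDiffOn ℝ (⊤ : ℕ∞) (deriv k) I := h.smoothk.deriv_of_isOpen hIo (by simp)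
  have hkd2 : ∀ s ∈ I, HasDerivAt (deriv k) (deriv (deriv k) s) s := fun s hs =>
    ((hk'C.differentiableOn (by simp)).differentiableAt (hIo.mem_nhds hs)).hasDerivAt
  have hr₁d : ∀ s ∈ I, HasDerivAt r₁ (deriv r₁ s) s := fun s hs =>
    ((hr₁smooth.differentiableOn (by simp)).differentiableAt (hIo.mem_nhds hs)).hasDerivAt
  -- Gram identities for derivatives
  have H1 : ∀ s ∈ I, bB (deriv f s) (f s) = 0 := by
    intro s hs
    have h0 := deriv_eq_zero_on hIo hs h.hff (hasDerivAt_bB (hfd s hs) (hfd s hs))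
    have hsym := bB_symm (f s) (deriv f s)
    linarith
  have H2 : ∀ s ∈ I, bB (deriv f s) q = 0 := by
    intro s hs
    have h0 := deriv_eq_zero_on hIo hs h.hfq (hasDerivAt_bB (hfd s hs) (hasDerivAt_const s q))
    rw [bB_zero_right] at h0; linarith
  have H3 : ∀ s ∈ I, bB (deriv f s) p = 0 := by
    intro s hs
    have h0 := deriv_eq_zero_on hIo hs h.hfp (hasDerivAt_bB (hfd s hs) (hasDerivAt_const s p))
    rw [bB_zero_right] at h0; linarith
  have H4 : ∀ s ∈ I, bB (deriv f s) (tf s) = 0 := by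
    intro s hs
    have h0 := deriv_eq_zero_on hIo hs h.hft (hasDerivAt_bB (hfd s hs) (htd s hs))
    rw [h.htang s hs, bB_smul_right, bB_symm (f s) (deriv f s), H1 s hs] at h0
    linarith
  have H5 : ∀ s ∈ I, bB (deriv (deriv f) s) (deriv f s) = 0 := by
    intro s hs
    have h0 := deriv_eq_zero_on hIo hs h.hunit (hasDerivAt_bB (hfd2 s hs) (hfd2 s hs))
    have hsym := bB_symm (deriv f s) (deriv (deriv f) s)
    linarith
  have H6 : ∀ s ∈ I, bB (deriv (deriv f) s) (f s) = -1 := by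
    intro s hs
    have h0 := deriv_eq_zero_on hIo hs H1 (hasDerivAt_bB (hfd2 s hs) (hfd s hs))
    rw [h.hunit s hs] at h0; linarith
  have H7 : ∀ s ∈ I, bB (deriv (deriv f) s) (tf s) = k s := by
    intro s hs
    have h0 := deriv_eq_zero_on hIo hs H4 (hasDerivAt_bB (hfd2 s hs) (htd s hs))
    rw [h.htang s hs, bB_smul_right, h.hunit s hs] at h0
    linarith
  have H8p : ∀ s ∈ I, bB (deriv (deriv f) s) p = 0 := by
    intro s hs
    have h0 := deriv_eq_zero_on hIo hs H3 (hasDerivAt_bB (hfd2 s hs) (hasDerivAt_const s p))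
    rw [bB_zero_right] at h0; linarith
  have H8q : ∀ s ∈ I, bB (deriv (deriv f) s) q = 0 := by
    intro s hs
    have h0 := deriv_eq_zero_on hIo hs H2 (hasDerivAt_bB (hfd2 s hs) (hasDerivAt_const s q))
    rw [bB_zero_right] at h0; linarith
  -- second structure equation
  have H9 : ∀ s ∈ I, deriv (deriv f) s =
      (-κ) • f s + (χ * k s) • tf s + (-(k s)) • p + q := by
    intro s hs
    have hz : deriv (deriv f) s + κ • f s - (χ * k s) • tf s + (k s) • p - q = 0 := by
      apply perp_frame (h.hff s hs) (h.hft s hs) ((bB_symm _ _).trans (H1 s hs))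
        (h.hfp s hs) (h.hfq s hs) (h.htt s hs) ((bB_symm _ _).trans (H4 s hs))
        (h.htp s hs) (h.htq s hs) (h.hunit s hs) (H3 s hs) (H2 s hs)
        h.hpp h.hpq h.hqq
      · simp only [bB_add_left, bB_sub_left, bB_smul_left]
        rw [H6 s hs, h.hff s hs, bB_symm (tf s) (f s), h.hft s hs,
          bB_symm p (f s), h.hfp s hs, bB_symm q (f s), h.hfq s hs]; ring
      · simp only [bB_add_left, bB_sub_left, bB_smul_left]
        rw [H7 s hs, h.hft s hs, h.htt s hs,
          bB_symm p (tf s), h.htp s hs, bB_symm q (tf s), h.htq s hs]; ring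
      · simp only [bB_add_left, bB_sub_left, bB_smul_left]
        rw [H5 s hs, bB_symm (f s) (deriv f s), H1 s hs,
          bB_symm (tf s) (deriv f s), H4 s hs,
          bB_symm p (deriv f s), H3 s hs, bB_symm q (deriv f s), H2 s hs]; ring
      · simp only [bB_add_left, bB_sub_left, bB_smul_left]
        rw [H8p s hs, h.hfp s hs, h.htp s hs, h.hpp, bB_symm q p, h.hpq]; ring
      · simp only [bB_add_left, bB_sub_left, bB_smul_left]
        rw [H8q s hs, h.hfq s hs, h.htq s hs, h.hpq, h.hqq]; ring
    apply eq_of_sub_eq_zero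
    have he : deriv (deriv f) s - ((-κ) • f s + (χ * k s) • tf s + (-(k s)) • p + q)
        = deriv (deriv f) s + κ • f s - (χ * k s) • tf s + (k s) • p - q := by module
    rw [he, hz]
  have H10 : ∀ s ∈ I, bB (deriv (deriv f) s) r₀ =
      -κ * bB (f s) r₀ + χ * k s * bB (tf s) r₀ - k s * bB p r₀ + bB q r₀ := by
    intro s hs
    rw [H9 s hs, bB_add_left, bB_add_left, bB_add_left, bB_smul_left, bB_smul_left,
      bB_smul_left]
    ring
  -- decomposition of r₁
  have hr₁dec : ∀ s ∈ I, r₁ s = (-(bB (r₁ s) q)) • f s + (-(bB (r₁ s) p)) • tf s := by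
    intro s hs
    obtain ⟨a₀, b₀, hab⟩ := hrC s hs
    have ha : -(bB (r₁ s) q) = a₀ := by
      rw [hab, bB_add_left, bB_smul_left, bB_smul_left, h.hfq s hs, h.htq s hs]; ring
    have hb : -(bB (r₁ s) p) = b₀ := by
      rw [hab, bB_add_left, bB_smul_left, bB_smul_left, h.hfp s hs, h.htp s hs]; ring
    rw [ha, hb]; exact hab
  -- the conserved-quantity equation
  have hderiv_r₁ : ∀ s ∈ I, deriv r₁ s =
      (bB (f s) r₀) • deriv f s - (bB (deriv f s) r₀) • f s := by
    intro s hs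
    have h0 := hreq s hs
    have hx : ξ s r₀ = (bB (deriv f s) r₀) • f s - (bB (f s) r₀) • deriv f s := by
      rw [hξ s, ContinuousLinearMap.neg_apply, wedge_apply]
      module
    rw [hx] at h0
    have h1 := eq_neg_of_add_eq_zero_left h0
    rw [h1]; module
  -- scalar derivatives
  have hald : ∀ s ∈ I, HasDerivAt (fun u => bB (f u) r₀) (bB (deriv f s) r₀) s := by
    intro s hs
    have h1 := hasDerivAt_bB (hfd s hs) (hasDerivAt_const s r₀)
    rw [bB_zero_right, add_zero] at h1; exact h1
  have hbed : ∀ s ∈ I,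
      HasDerivAt (fun u => bB (tf u) r₀) (-(k s) * bB (deriv f s) r₀) s := by
    intro s hs
    have h1 := hasDerivAt_bB (htd s hs) (hasDerivAt_const s r₀)
    rw [bB_zero_right, add_zero, h.htang s hs, bB_smul_left] at h1; exact h1
  have hgad : ∀ s ∈ I, HasDerivAt (fun u => bB (deriv f u) r₀)
      (-κ * bB (f s) r₀ + χ * k s * bB (tf s) r₀ - k s * bB p r₀ + bB q r₀) s := by
    intro s hs
    have h1 := hasDerivAt_bB (hfd2 s hs) (hasDerivAt_const s r₀)
    rw [bB_zero_right, add_zero, H10 s hs] at h1; exact h1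
  have hAd : ∀ s ∈ I,
      HasDerivAt (fun u => -(bB (r₁ u) q)) (-(bB (deriv f s) r₀)) s := by
    intro s hs
    have h1 := (hasDerivAt_bB (hr₁d s hs) (hasDerivAt_const s q)).neg
    rw [bB_zero_right, add_zero, hderiv_r₁ s hs, bB_sub_left, bB_smul_left, bB_smul_left,
      H2 s hs, h.hfq s hs] at h1
    exact h1.congr_deriv (by ring)
  have hBd : ∀ s ∈ I, HasDerivAt (fun u => -(bB (r₁ u) p)) 0 s := by
    intro s hs
    have h1 := (hasDerivAt_bB (hr₁d s hs) (hasDerivAt_const s p)).neg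
    rw [bB_zero_right, add_zero, hderiv_r₁ s hs, bB_sub_left, bB_smul_left, bB_smul_left,
      H3 s hs, h.hfp s hs] at h1
    exact h1.congr_deriv (by ring)
  -- E7 : a = α + b k
  have hperp : ∀ s ∈ I, bB (r₁ s) (deriv f s) = 0 := by
    intro s hs
    rw [hr₁dec s hs, bB_add_left, bB_smul_left, bB_smul_left,
      bB_symm (f s) (deriv f s), H1 s hs, bB_symm (tf s) (deriv f s), H4 s hs]
    ring
  have E7 : ∀ s ∈ I, -(bB (r₁ s) q) = bB (f s) r₀ + (-(bB (r₁ s) p)) * k s := by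
    intro s hs
    have h0 := deriv_eq_zero_on hIo hs hperp (hasDerivAt_bB (hr₁d s hs) (hfd2 s hs))
    rw [hderiv_r₁ s hs, bB_sub_left, bB_smul_left, bB_smul_left, h.hunit s hs,
      bB_symm (f s) (deriv f s), H1 s hs] at h0
    rw [hr₁dec s hs, bB_add_left, bB_smul_left, bB_smul_left,
      bB_symm (f s) (deriv (deriv f) s), H6 s hs,
      bB_symm (tf s) (deriv (deriv f) s), H7 s hs] at h0
    linear_combination -h0
  -- constancy machinery
  have const_of : ∀ g : ℝ → ℝ, (∀ s ∈ I, HasDerivAt g 0 s) → ∀ s ∈ I, g s = g t₀ := by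
    intro g hg s hs
    apply hIconv.is_const_of_fderivWithin_eq_zero
      (fun x hx => (hg x hx).differentiableAt.differentiableWithinAt)
      (fun x hx => ?_) hs ht₀
    rw [fderivWithin_of_isOpen hIo hx, (hg x hx).hasFDerivAt.fderiv]
    ext y
    simp
  obtain ⟨μ₀, hμ₀def⟩ : ∃ x : ℝ, x = -(bB (r₁ t₀) p) := ⟨_, rfl⟩
  have hBconst : ∀ s ∈ I, -(bB (r₁ s) p) = μ₀ := by
    rw [hμ₀def]; exact const_of _ (fun s hs => hBd s hs)
  have hcconst : ∀ s ∈ I,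
      -(bB (r₁ s) q) + bB (f s) r₀ = -(bB (r₁ t₀) q) + bB (f t₀) r₀ := by
    apply const_of
    intro s hs
    have h1 := (hAd s hs).add (hald s hs)
    exact h1.congr_deriv (by ring)
  obtain ⟨c, hcdef⟩ : ∃ x : ℝ, x = -(bB (r₁ t₀) q) + bB (f t₀) r₀ := ⟨_, rfl⟩
  have hcconst' : ∀ s ∈ I, -(bB (r₁ s) q) + bB (f s) r₀ = c := by
    rw [hcdef]; exact hcconst
  have hal : ∀ s ∈ I, bB (f s) r₀ = (c - μ₀ * k s) / 2 := by
    intro s hs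
    have h1 := E7 s hs
    have h2 := hcconst' s hs
    have h3 := hBconst s hs
    rw [h3] at h1
    linear_combination h2 / 2 - h1 / 2
  have hga : ∀ s ∈ I, bB (deriv f s) r₀ = -(μ₀ / 2) * deriv k s := by
    intro s hs
    have hD2 : HasDerivAt (fun u => (c - μ₀ * k u) / 2) (-(μ₀ / 2) * deriv k s) s := by
      have h1 := (((hkd s hs).const_mul μ₀).const_sub c).div_const 2
      exact h1.congr_deriv (by ring)
    exact (hald s hs).unique (hasDerivAt_congr_on hIo hs (fun u hu => hal u hu) hD2)
  obtain ⟨c₂, hc₂def⟩ : ∃ x : ℝ, x = bB (tf t₀) r₀ - μ₀ / 4 * (k t₀) ^ 2 := ⟨_, rfl⟩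
  have hbe : ∀ s ∈ I, bB (tf s) r₀ = μ₀ / 4 * (k s) ^ 2 + c₂ := by
    intro s hs
    have hconst := const_of (fun u => bB (tf u) r₀ - μ₀ / 4 * (k u) ^ 2) ?_ s hs
    · rw [hc₂def]; linear_combination hconst
    · intro u hu
      have h1 := (hbed u hu).sub (((hkd u hu).pow 2).const_mul (μ₀ / 4))
      refine h1.congr_deriv ?_
      rw [hga u hu]; push_cast; ring
  have hstar : ∀ s ∈ I, -(μ₀ / 2) * deriv (deriv k) s =
      -κ * ((c - μ₀ * k s) / 2) + χ * k s * (μ₀ / 4 * (k s) ^ 2 + c₂)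
        - k s * bB p r₀ + bB q r₀ := by
    intro s hs
    have hD2 : HasDerivAt (fun u => bB (deriv f u) r₀)
        (-(μ₀ / 2) * deriv (deriv k) s) s := by
      apply hasDerivAt_congr_on hIo hs (fun u hu => hga u hu)
      exact (hkd2 s hs).const_mul (-(μ₀ / 2))
    have h1 := (hgad s hs).unique hD2
    rw [hal s hs, hbe s hs] at h1
    linarith
  -- final case analysis
  by_cases hμ : μ₀ = 0
  · have hkrel : ∀ s ∈ I, k s * (χ * c₂ - bB p r₀) = κ * c / 2 - bB q r₀ := by
      intro s hs
      have h1 := hstar s hs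
      rw [hμ] at h1
      linear_combination -h1
    by_cases h1 : χ * c₂ - bB p r₀ = 0
    · exfalso
      have hQc : κ * c / 2 - bB q r₀ = 0 := by
        have h2 := hkrel t₀ ht₀; rw [h1, mul_zero] at h2; linarith
      have hz : r₀ + c₂ • p + (c / 2) • q = 0 := by
        apply perp_frame (h.hff t₀ ht₀) (h.hft t₀ ht₀) ((bB_symm _ _).trans (H1 t₀ ht₀))
          (h.hfp t₀ ht₀) (h.hfq t₀ ht₀) (h.htt t₀ ht₀) ((bB_symm _ _).trans (H4 t₀ ht₀))
          (h.htp t₀ ht₀) (h.htq t₀ ht₀) (h.hunit t₀ ht₀) (H3 t₀ ht₀) (H2 t₀ ht₀)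
          h.hpp h.hpq h.hqq
        · rw [bB_add_left, bB_add_left, bB_smul_left, bB_smul_left,
            bB_symm r₀ (f t₀), hal t₀ ht₀, hμ, bB_symm p (f t₀), h.hfp t₀ ht₀,
            bB_symm q (f t₀), h.hfq t₀ ht₀]
          ring
        · rw [bB_add_left, bB_add_left, bB_smul_left, bB_smul_left,
            bB_symm r₀ (tf t₀), hbe t₀ ht₀, hμ, bB_symm p (tf t₀), h.htp t₀ ht₀,
            bB_symm q (tf t₀), h.htq t₀ ht₀]
          ring
        · rw [bB_add_left, bB_add_left, bB_smul_left, bB_smul_left,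
            bB_symm r₀ (deriv f t₀), hga t₀ ht₀, hμ, bB_symm p (deriv f t₀), H3 t₀ ht₀,
            bB_symm q (deriv f t₀), H2 t₀ ht₀]
          ring
        · rw [bB_add_left, bB_add_left, bB_smul_left, bB_smul_left,
            bB_symm r₀ p, h.hpp, bB_symm q p, h.hpq]
          linear_combination -h1
        · rw [bB_add_left, bB_add_left, bB_smul_left, bB_smul_left,
            bB_symm r₀ q, h.hpq, h.hqq]
          linear_combination -hQc
      have hspan : (-c₂) • p + (-(c / 2)) • q = r₀ := by
        have he : r₀ - ((-c₂) • p + (-(c / 2)) • q)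
            = r₀ + c₂ • p + (c / 2) • q := by module
        have h2 : r₀ - ((-c₂) • p + (-(c / 2)) • q) = 0 := by rw [he]; exact hz
        have h3 := sub_eq_zero.mp h2
        exact h3.symm
      exact hr0 (Submodule.mem_span_pair.2 ⟨-c₂, -(c / 2), hspan⟩)
    · have hkconst : ∀ s ∈ I,
          k s = (κ * c / 2 - bB q r₀) / (χ * c₂ - bB p r₀) := by
        intro s hs
        rw [eq_div_iff h1]
        exact hkrel s hs
      have hk'0 : ∀ s ∈ I, deriv k s = 0 := fun s hs =>
        deriv_eq_zero_on hIo hs hkconst (hkd s hs)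
      have hk''0 : ∀ s ∈ I, deriv (deriv k) s = 0 := fun s hs =>
        deriv_eq_zero_on hIo hs hk'0 (hkd2 s hs)
      refine ⟨-(χ / 2 * ((κ * c / 2 - bB q r₀) / (χ * c₂ - bB p r₀)) ^ 3), -κ,
        fun s hs => ?_⟩
      rw [hk''0 s hs, hkconst s hs]; ring
  · refine ⟨2 * bB q r₀ / μ₀ - κ * c / μ₀,
      2 * χ * c₂ / μ₀ - 2 * bB p r₀ / μ₀, fun s hs => ?_⟩
    have hst := hstar s hs
    field_simp
    linear_combination (-4) * hst
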